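/- With t = ξ' the unit tangent, the identity det(t, t'', t''') = k³τ²σ + k⁴τ holds at every point; equivalently det(ξ', ξ''', ξ'''') = k³τ²σ + k⁴τ. Consequently the inequality det(t, t'', t''')/(k²τ) > k² is equivalent to στ > 0. -/

import Mathlib

open scoped RealInnerProductSpace

noncomputable section

def det3 (u v w : EuclideanSpace ℝ (Fin 3)) : ℝ :=
  u 0 * (v 1 * w 2 - v 2 * w 1) - u 1 * (v 0 * w 2 - v 2 * w 0)
    + u 2 * (v 0 * w 1 - v 1 * w 0)

def cross3 (u v : EuclideanSpace ℝ (Fin 3)) : EuclideanSpace ℝ (Fin 3) :=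
  (WithLp.equiv 2 (Fin 3 → ℝ)).symm
    ![u 1 * v 2 - u 2 * v 1, u 2 * v 0 - u 0 * v 2, u 0 * v 1 - u 1 * v 0]

lemma inner3 (u v : EuclideanSpace ℝ (Fin 3)) :
    ⟪u, v⟫ = u 0 * v 0 + u 1 * v 1 + u 2 * v 2 := by
  simp [PiLp.inner_apply, RCLike.inner_apply, Fin.sum_univ_three]; ring

lemma det3_mul_det3 (a b c x y z : EuclideanSpace ℝ (Fin 3)) :
    det3 a b c * det3 x y z =
      ⟪a,x⟫ * (⟪b,y⟫ * ⟪c,z⟫ - ⟪b,z⟫ * ⟪c,y⟫)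
      - ⟪a,y⟫ * (⟪b,x⟫ * ⟪c,z⟫ - ⟪b,z⟫ * ⟪c,x⟫)
      + ⟪a,z⟫ * (⟪b,x⟫ * ⟪c,y⟫ - ⟪b,y⟫ * ⟪c,x⟫) := by
  simp only [det3, inner3]; ring

lemma det3_self12 (u w : EuclideanSpace ℝ (Fin 3)) : det3 u u w = 0 := by
  simp only [det3]; ring

lemma det3_self23 (u w : EuclideanSpace ℝ (Fin 3)) : det3 u w w = 0 := by
  simp only [det3]; ring

lemma HasDerivAt.euclid_apply {f : ℝ → EuclideanSpace ℝ (Fin 3)}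
    {v : EuclideanSpace ℝ (Fin 3)} {s : ℝ} (hf : HasDerivAt f v s) (i : Fin 3) :
    HasDerivAt (fun x => f x i) (v i) s := by
  exact (EuclideanSpace.proj (𝕜 := ℝ) i).hasFDerivAt.comp_hasDerivAt s hf

lemma hasDerivAt_det3 {f g h : ℝ → EuclideanSpace ℝ (Fin 3)}
    {f' g' h' : EuclideanSpace ℝ (Fin 3)} {s : ℝ}
    (hf : HasDerivAt f f' s) (hg : HasDerivAt g g' s) (hh : HasDerivAt h h' s) :
    HasDerivAt (fun x => det3 (f x) (g x) (h x))
      (det3 f' (g s) (h s) + det3 (f s) g' (h s) + det3 (f s) (g s) h') s := by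
  have F := fun i => hf.euclid_apply i
  have G := fun i => hg.euclid_apply i
  have H := fun i => hh.euclid_apply i
  have key :=
    (((F 0).mul (((G 1).mul (H 2)).sub ((G 2).mul (H 1)))).sub
      ((F 1).mul (((G 0).mul (H 2)).sub ((G 2).mul (H 0))))).add
      ((F 2).mul (((G 0).mul (H 1)).sub ((G 1).mul (H 0))))
  simp only [det3]
  refine key.congr_deriv ?_
  simp only [Pi.mul_apply, Pi.sub_apply]
  ring

lemma final_ineq (S gg dd σv : ℝ) (hS2 : S ^ 2 = gg) (hS0 : 0 < S) (hdd : dd ≠ 0) :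
    (S ^ 3 * (dd / gg) ^ 2 * σv + S ^ 4 * (dd / gg)) / (S ^ 2 * (dd / gg)) > S ^ 2 ↔
      σv * (dd / gg) > 0 := by
  subst hS2
  have hS : S ≠ 0 := ne_of_gt hS0
  have h1 : (S ^ 3 * (dd / S ^ 2) ^ 2 * σv + S ^ 4 * (dd / S ^ 2)) / (S ^ 2 * (dd / S ^ 2))
      = (dd * σv) / S + S ^ 2 := by
    field_simp
  rw [h1]
  constructor
  · intro h
    have h2 : 0 < dd * σv / S := by linarith
    have h3 : 0 < dd * σv := by
      have := mul_pos h2 hS0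
      rwa [div_mul_cancel₀ _ hS] at this
    have : σv * (dd / S ^ 2) = (dd * σv) / S ^ 2 := by ring
    rw [this]
    positivity
  · intro h
    have h3 : 0 < dd * σv := by
      have h4 : σv * (dd / S ^ 2) = (dd * σv) / S ^ 2 := by ring
      rw [h4] at h
      have := mul_pos h (pow_pos hS0 2)
      rwa [div_mul_cancel₀ _ (pow_ne_zero 2 hS)] at this
    have : 0 < dd * σv / S := div_pos h3 hS0
    linarith

lemma final_main (S gg uu pp qq dd dd' DD : ℝ) (hS2 : S ^ 2 = gg) (hS0 : 0 < S)
    (hdd : dd ≠ 0)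
    (G1 : dd * dd = gg * qq - uu * uu - gg ^ 3)
    (hkey : gg * DD = uu * dd' - pp * dd) :
    DD = S ^ 3 * (dd / gg) ^ 2 *
        (S⁻¹ * (dd / gg) +
          -(((pp + qq) * (S * dd) - uu * (2 * uu / (2 * S) * dd + S * dd')) / (S * dd) ^ 2))
      + S ^ 4 * (dd / gg) := by
  subst hS2
  have hS : S ≠ 0 := ne_of_gt hS0
  field_simp
  linear_combination S ^ 2 * hkey - dd * G1

theorem stmt_8
    (ξ : ℝ → EuclideanSpace ℝ (Fin 3))
    (hξ : ContDiff ℝ (⊤ : ℕ∞) ξ)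
    (hunit : ∀ t, ‖deriv ξ t‖ = 1)
    (k τ r : ℝ → ℝ) (N B : ℝ → EuclideanSpace ℝ (Fin 3))
    (hk : ∀ t, k t = ‖deriv (deriv ξ) t‖)
    (hkpos : ∀ t, 0 < k t)
    (hN : ∀ t, N t = (k t)⁻¹ • deriv (deriv ξ) t)
    (hB : ∀ t, B t = cross3 (deriv ξ t) (N t))
    (hτ : ∀ t, τ t = det3 (deriv ξ t) (deriv (deriv ξ) t) (deriv (deriv (deriv ξ)) t) / (k t) ^ 2)
    (hτne : ∀ t, τ t ≠ 0)
    (hr : ∀ t, r t = (k t)⁻¹)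
    (σ : ℝ → ℝ)
    (hσ : ∀ t, σ t = r t * τ t + deriv (fun s => deriv r s / τ s) t)
    (t : ℝ) :
    det3 (deriv ξ t) (deriv (deriv (deriv ξ)) t) (deriv (deriv (deriv (deriv ξ))) t) =
      k t ^ 3 * τ t ^ 2 * σ t + k t ^ 4 * τ t ∧
    (det3 (deriv ξ t) (deriv (deriv (deriv ξ)) t) (deriv (deriv (deriv (deriv ξ))) t) /
        (k t ^ 2 * τ t) > k t ^ 2 ↔ σ t * τ t > 0) := by
  set ξ1 := deriv ξ with hξ1def
  set ξ2 := deriv ξ1 with hξ2def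
  set ξ3 := deriv ξ2 with hξ3def
  set ξ4 := deriv ξ3 with hξ4def
  -- smoothness
  have h8 : ContDiff ℝ (⊤ : ℕ∞) ξ := hξ.of_le (by simp)
  have c1 : ContDiff ℝ (⊤ : ℕ∞) ξ1 := (contDiff_infty_iff_deriv.mp h8).2
  have c2 : ContDiff ℝ (⊤ : ℕ∞) ξ2 := (contDiff_infty_iff_deriv.mp c1).2
  have c3 : ContDiff ℝ (⊤ : ℕ∞) ξ3 := (contDiff_infty_iff_deriv.mp c2).2
  have d1 : ∀ s, HasDerivAt ξ1 (ξ2 s) s := fun s =>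
    ((c1.differentiable (by simp)) s).hasDerivAt
  have d2 : ∀ s, HasDerivAt ξ2 (ξ3 s) s := fun s =>
    ((c2.differentiable (by simp)) s).hasDerivAt
  have d3 : ∀ s, HasDerivAt ξ3 (ξ4 s) s := fun s =>
    ((c3.differentiable (by simp)) s).hasDerivAt
  -- unit speed identities
  have F1 : ∀ s, ⟪ξ1 s, ξ1 s⟫ = 1 := fun s => by
    rw [real_inner_self_eq_norm_sq, hunit s]; norm_num
  have F2 : ∀ s, ⟪ξ1 s, ξ2 s⟫ = 0 := by
    intro s
    have h1 : HasDerivAt (fun x => ⟪ξ1 x, ξ1 x⟫) (⟪ξ1 s, ξ2 s⟫ + ⟪ξ2 s, ξ1 s⟫) s :=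
      (d1 s).inner ℝ (d1 s)
    have h2 : HasDerivAt (fun x => ⟪ξ1 x, ξ1 x⟫) 0 s := by
      have he : (fun x => ⟪ξ1 x, ξ1 x⟫) = fun _ => (1 : ℝ) := funext F1
      rw [he]; exact hasDerivAt_const s 1
    have h3 := h1.unique h2
    have hc : ⟪ξ2 s, ξ1 s⟫ = ⟪ξ1 s, ξ2 s⟫ := real_inner_comm _ _
    linarith
  have F3 : ∀ s, ⟪ξ1 s, ξ3 s⟫ = -⟪ξ2 s, ξ2 s⟫ := by
    intro s
    have h1 : HasDerivAt (fun x => ⟪ξ1 x, ξ2 x⟫) (⟪ξ1 s, ξ3 s⟫ + ⟪ξ2 s, ξ2 s⟫) s :=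
      (d1 s).inner ℝ (d2 s)
    have h2 : HasDerivAt (fun x => ⟪ξ1 x, ξ2 x⟫) 0 s := by
      have he : (fun x => ⟪ξ1 x, ξ2 x⟫) = fun _ => (0 : ℝ) := funext F2
      rw [he]; exact hasDerivAt_const s 0
    have h3 := h1.unique h2
    linarith
  have F4 : ∀ s, ⟪ξ1 s, ξ4 s⟫ = -(3 * ⟪ξ2 s, ξ3 s⟫) := by
    intro s
    have h1 : HasDerivAt (fun x => ⟪ξ1 x, ξ3 x⟫ + ⟪ξ2 x, ξ2 x⟫)
        ((⟪ξ1 s, ξ4 s⟫ + ⟪ξ2 s, ξ3 s⟫) + (⟪ξ2 s, ξ3 s⟫ + ⟪ξ3 s, ξ2 s⟫)) s :=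
      ((d1 s).inner ℝ (d3 s)).add ((d2 s).inner ℝ (d2 s))
    have h2 : HasDerivAt (fun x => ⟪ξ1 x, ξ3 x⟫ + ⟪ξ2 x, ξ2 x⟫) 0 s := by
      have he : (fun x => ⟪ξ1 x, ξ3 x⟫ + ⟪ξ2 x, ξ2 x⟫) = fun _ => (0 : ℝ) := by
        funext x; rw [F3 x]; ring
      rw [he]; exact hasDerivAt_const s 0
    have h3 := h1.unique h2
    have hc : ⟪ξ3 s, ξ2 s⟫ = ⟪ξ2 s, ξ3 s⟫ := real_inner_comm _ _
    linarith
  -- scalar setup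
  have hk2 : ∀ s, (k s) ^ 2 = ⟪ξ2 s, ξ2 s⟫ := fun s => by
    rw [hk s, ← real_inner_self_eq_norm_sq]
  have hG0 : ∀ s, (0 : ℝ) < ⟪ξ2 s, ξ2 s⟫ := fun s => by
    rw [← hk2 s]; exact pow_pos (hkpos s) 2
  have hGne : ∀ s, ⟪ξ2 s, ξ2 s⟫ ≠ 0 := fun s => ne_of_gt (hG0 s)
  have hkS : ∀ s, k s = Real.sqrt ⟪ξ2 s, ξ2 s⟫ := fun s => by
    rw [← hk2 s, Real.sqrt_sq (hkpos s).le]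
  have hSne : ∀ s, Real.sqrt ⟪ξ2 s, ξ2 s⟫ ≠ 0 := fun s => by
    rw [← hkS s]; exact ne_of_gt (hkpos s)
  have hτ' : ∀ s, τ s = det3 (ξ1 s) (ξ2 s) (ξ3 s) / ⟪ξ2 s, ξ2 s⟫ := fun s => by
    rw [hτ s, hk2 s]
  have hδne : ∀ s, det3 (ξ1 s) (ξ2 s) (ξ3 s) ≠ 0 := by
    intro s h
    apply hτne s
    rw [hτ' s, h, zero_div]
  -- derivative of G
  have hG : ∀ s, HasDerivAt (fun x => ⟪ξ2 x, ξ2 x⟫) (2 * ⟪ξ2 s, ξ3 s⟫) s := fun s => by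
    have := (d2 s).inner ℝ (d2 s)
    have hc : ⟪ξ3 s, ξ2 s⟫ = ⟪ξ2 s, ξ3 s⟫ := real_inner_comm _ _
    rw [hc, ← two_mul] at this
    exact this
  -- derivative of δ
  have hδd : ∀ s, HasDerivAt (fun x => det3 (ξ1 x) (ξ2 x) (ξ3 x))
      (det3 (ξ1 s) (ξ2 s) (ξ4 s)) s := fun s => by
    have := hasDerivAt_det3 (d1 s) (d2 s) (d3 s)
    rwa [det3_self12, det3_self23, zero_add, zero_add] at this
  -- derivative of sqrt of G
  have hsq : ∀ s, HasDerivAt (fun x => Real.sqrt ⟪ξ2 x, ξ2 x⟫)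
      (2 * ⟪ξ2 s, ξ3 s⟫ / (2 * Real.sqrt ⟪ξ2 s, ξ2 s⟫)) s := fun s =>
    (hG s).sqrt (hGne s)
  -- derivative of r
  have hrd : ∀ s, HasDerivAt r
      (-(⟪ξ2 s, ξ3 s⟫ / (Real.sqrt ⟪ξ2 s, ξ2 s⟫ * ⟪ξ2 s, ξ2 s⟫))) s := by
    intro s
    have hre : r = fun x => (Real.sqrt ⟪ξ2 x, ξ2 x⟫)⁻¹ := funext fun x => by
      rw [hr x, hkS x]
    rw [hre]
    have h2 := (hsq s).inv (hSne s)
    refine h2.congr_deriv ?_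
    rw [Real.sq_sqrt (hG0 s).le]
    field_simp
  -- the function deriv r / τ
  have hF : (fun s => deriv r s / τ s) =
      fun s => -(⟪ξ2 s, ξ3 s⟫ / (Real.sqrt ⟪ξ2 s, ξ2 s⟫ * det3 (ξ1 s) (ξ2 s) (ξ3 s))) := by
    funext s
    rw [(hrd s).deriv, hτ' s]
    have hgen : ∀ (A Gv S δv : ℝ), Gv ≠ 0 → S ≠ 0 → δv ≠ 0 →
        -(A / (S * Gv)) / (δv / Gv) = -(A / (S * δv)) := by
      intros A Gv S δv h1 h2 h3; field_simp
    exact hgen _ _ _ _ (hGne s) (hSne s) (hδne s)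
  -- derivative of deriv r / τ at t
  have hv : HasDerivAt (fun x => Real.sqrt ⟪ξ2 x, ξ2 x⟫ * det3 (ξ1 x) (ξ2 x) (ξ3 x))
      (2 * ⟪ξ2 t, ξ3 t⟫ / (2 * Real.sqrt ⟪ξ2 t, ξ2 t⟫) * det3 (ξ1 t) (ξ2 t) (ξ3 t)
        + Real.sqrt ⟪ξ2 t, ξ2 t⟫ * det3 (ξ1 t) (ξ2 t) (ξ4 t)) t :=
    (hsq t).mul (hδd t)
  have hvne : Real.sqrt ⟪ξ2 t, ξ2 t⟫ * det3 (ξ1 t) (ξ2 t) (ξ3 t) ≠ 0 :=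
    mul_ne_zero (hSne t) (hδne t)
  have hu : HasDerivAt (fun x => ⟪ξ2 x, ξ3 x⟫) (⟪ξ2 t, ξ4 t⟫ + ⟪ξ3 t, ξ3 t⟫) t :=
    (d2 t).inner ℝ (d3 t)
  have hFd := ((hu.div hv hvne).neg)
  have hderiv : deriv (fun s => deriv r s / τ s) t =
      -(((⟪ξ2 t, ξ4 t⟫ + ⟪ξ3 t, ξ3 t⟫) * (Real.sqrt ⟪ξ2 t, ξ2 t⟫ * det3 (ξ1 t) (ξ2 t) (ξ3 t))
          - ⟪ξ2 t, ξ3 t⟫ * (2 * ⟪ξ2 t, ξ3 t⟫ / (2 * Real.sqrt ⟪ξ2 t, ξ2 t⟫) * det3 (ξ1 t) (ξ2 t) (ξ3 t)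
            + Real.sqrt ⟪ξ2 t, ξ2 t⟫ * det3 (ξ1 t) (ξ2 t) (ξ4 t)))
        / (Real.sqrt ⟪ξ2 t, ξ2 t⟫ * det3 (ξ1 t) (ξ2 t) (ξ3 t)) ^ 2) := by
    rw [hF]
    exact hFd.deriv
  -- commuted inner products at t
  have h21 : ⟪ξ2 t, ξ1 t⟫ = 0 := by rw [real_inner_comm]; exact F2 t
  have h31 : ⟪ξ3 t, ξ1 t⟫ = -⟪ξ2 t, ξ2 t⟫ := by rw [real_inner_comm]; exact F3 t
  have h32 : ⟪ξ3 t, ξ2 t⟫ = ⟪ξ2 t, ξ3 t⟫ := real_inner_comm _ _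
  -- Gram identities
  have G1 : det3 (ξ1 t) (ξ2 t) (ξ3 t) * det3 (ξ1 t) (ξ2 t) (ξ3 t) =
      ⟪ξ2 t, ξ2 t⟫ * ⟪ξ3 t, ξ3 t⟫ - ⟪ξ2 t, ξ3 t⟫ * ⟪ξ2 t, ξ3 t⟫ - ⟪ξ2 t, ξ2 t⟫ ^ 3 := by
    have CB := det3_mul_det3 (ξ1 t) (ξ2 t) (ξ3 t) (ξ1 t) (ξ2 t) (ξ3 t)
    rw [F1 t, F2 t, F3 t, h21, h31, h32] at CB
    linear_combination CB
  have G2 : det3 (ξ1 t) (ξ2 t) (ξ3 t) * det3 (ξ1 t) (ξ2 t) (ξ4 t) =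
      ⟪ξ2 t, ξ2 t⟫ * ⟪ξ3 t, ξ4 t⟫ - ⟪ξ2 t, ξ4 t⟫ * ⟪ξ2 t, ξ3 t⟫
        - 3 * ⟪ξ2 t, ξ3 t⟫ * ⟪ξ2 t, ξ2 t⟫ ^ 2 := by
    have CB := det3_mul_det3 (ξ1 t) (ξ2 t) (ξ3 t) (ξ1 t) (ξ2 t) (ξ4 t)
    rw [F1 t, F2 t, F4 t, h21, h31, h32] at CB
    linear_combination CB
  have G3 : det3 (ξ1 t) (ξ2 t) (ξ3 t) * det3 (ξ1 t) (ξ3 t) (ξ4 t) =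
      ⟪ξ2 t, ξ3 t⟫ * ⟪ξ3 t, ξ4 t⟫ - ⟪ξ2 t, ξ4 t⟫ * ⟪ξ3 t, ξ3 t⟫
        + ⟪ξ2 t, ξ2 t⟫ ^ 2 * ⟪ξ2 t, ξ4 t⟫ - 3 * ⟪ξ2 t, ξ2 t⟫ * ⟪ξ2 t, ξ3 t⟫ ^ 2 := by
    have CB := det3_mul_det3 (ξ1 t) (ξ2 t) (ξ3 t) (ξ1 t) (ξ3 t) (ξ4 t)
    rw [F1 t, F3 t, F4 t, h21, h31] at CB
    linear_combination CB
  have hkey : ⟪ξ2 t, ξ2 t⟫ * det3 (ξ1 t) (ξ3 t) (ξ4 t) =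
      ⟪ξ2 t, ξ3 t⟫ * det3 (ξ1 t) (ξ2 t) (ξ4 t) - ⟪ξ2 t, ξ4 t⟫ * det3 (ξ1 t) (ξ2 t) (ξ3 t) := by
    apply mul_left_cancel₀ (hδne t)
    linear_combination ⟪ξ2 t, ξ2 t⟫ * G3 - ⟪ξ2 t, ξ3 t⟫ * G2 + ⟪ξ2 t, ξ4 t⟫ * G1
  have hS0 : (0 : ℝ) < Real.sqrt ⟪ξ2 t, ξ2 t⟫ := by
    rw [← hkS t]; exact hkpos t
  have hS2 : Real.sqrt ⟪ξ2 t, ξ2 t⟫ ^ 2 = ⟪ξ2 t, ξ2 t⟫ := Real.sq_sqrt (hG0 t).le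
  have G1' : det3 (ξ1 t) (ξ2 t) (ξ3 t) * det3 (ξ1 t) (ξ2 t) (ξ3 t) =
      ⟪ξ2 t, ξ2 t⟫ * ⟪ξ3 t, ξ3 t⟫ - ⟪ξ2 t, ξ3 t⟫ * ⟪ξ2 t, ξ3 t⟫ - ⟪ξ2 t, ξ2 t⟫ ^ 3 := G1
  have part1 : det3 (ξ1 t) (ξ3 t) (ξ4 t) = k t ^ 3 * τ t ^ 2 * σ t + k t ^ 4 * τ t := by
    rw [hσ t, hderiv, hr t, hτ' t, hkS t]
    exact final_main _ _ _ _ _ _ _ _ hS2 hS0 (hδne t) G1' hkey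
  refine ⟨part1, ?_⟩
  rw [part1, hτ' t, hkS t]
  exact final_ineq _ _ _ _ hS2 hS0 (hδne t)
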